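/- Let A be closed densely defined, λ > 0 with λ ∈ spec(A*A), and m ≥ 0. If (φₙ) ⊆ dom(A*A) satisfies ‖φₙ‖ ≥ 1 and (A*A − λ)φₙ → 0, then ψₙ := (λ·I + (√(λ+m²) − m)·[[0,A*],[A,0]])·(φₙ, 0) satisfies ‖ψₙ‖ ≥ λ and (L − √(λ+m²))ψₙ → 0, where L = [[m, A*],[A, −m]]; consequently √(λ + m²) ∈ spec(L). -/

import Mathlib

open ContinuousLinearMap Filter in
/-- Weyl-sequence argument: if `λ > 0` lies in `spec(A*A)` with Weyl sequence `φₙ`, then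
`ψₙ := λ·(φₙ,0) + (√(λ+m²) − m)·(0, Aφₙ)` satisfies `‖ψₙ‖ ≥ λ`,
`(L − √(λ+m²))ψₙ → 0`, and consequently `√(λ+m²) ∈ spec(L)`. -/
theorem sqrt_in_spectrum_of_weyl_sequence
    {H₁ H₂ : Type*} [NormedAddCommGroup H₁] [InnerProductSpace ℂ H₁] [CompleteSpace H₁]
    [NormedAddCommGroup H₂] [InnerProductSpace ℂ H₂] [CompleteSpace H₂]
    (A : H₁ →L[ℂ] H₂) (m lam : ℝ) (hm : 0 ≤ m) (hlam : 0 < lam)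
    (hspec : (lam : ℂ) ∈ spectrum ℂ ((adjoint A).comp A))
    (φ : ℕ → H₁) (hφ : ∀ n, 1 ≤ ‖φ n‖)
    (hweyl : Tendsto (fun n => ((adjoint A).comp A) (φ n) - lam • φ n) atTop (nhds 0))
    (L : (H₁ × H₂) →L[ℂ] (H₁ × H₂))
    (hL : L = ((m : ℂ) • fst ℂ H₁ H₂ + (adjoint A).comp (snd ℂ H₁ H₂)).prod
        (A.comp (fst ℂ H₁ H₂) - (m : ℂ) • snd ℂ H₁ H₂))
    (ψ : ℕ → H₁ × H₂)
    (hψ : ∀ n, ψ n = (lam • φ n, (Real.sqrt (lam + m ^ 2) - m) • A (φ n))) :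
    (∀ n, lam ≤ ‖ψ n‖) ∧
    Tendsto (fun n => L (ψ n) - ((Real.sqrt (lam + m ^ 2) : ℂ)) • ψ n) atTop (nhds 0) ∧
    ((Real.sqrt (lam + m ^ 2) : ℂ)) ∈ spectrum ℂ L := by
  set s := Real.sqrt (lam + m ^ 2) with hs
  have hs2 : s ^ 2 = lam + m ^ 2 := Real.sq_sqrt (by positivity)
  have hs2' : (s : ℂ) ^ 2 = (lam : ℂ) + (m : ℂ) ^ 2 := by exact_mod_cast hs2
  have hr : ∀ (r : ℝ) (y : H₂), r • y = (r : ℂ) • y := fun r y => (Complex.coe_smul r y).symm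
  have hr1 : ∀ (r : ℝ) (y : H₁), r • y = (r : ℂ) • y := fun r y => (Complex.coe_smul r y).symm
  have h1 : ∀ n, lam ≤ ‖ψ n‖ := by
    intro n
    rw [hψ n]
    calc lam = lam * 1 := by ring
      _ ≤ lam * ‖φ n‖ := by nlinarith [hφ n]
      _ = ‖lam • φ n‖ := by rw [norm_smul]; simp [abs_of_pos hlam]
      _ ≤ ‖((lam • φ n, (s - m) • A (φ n)) : H₁ × H₂)‖ :=
          norm_fst_le (lam • φ n, (s - m) • A (φ n))
  have key : ∀ n, L (ψ n) - (s : ℂ) • ψ n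
      = ((s - m) • (((adjoint A).comp A) (φ n) - lam • φ n), 0) := by
    intro n
    rw [hL, hψ n]
    ext
    · simp only [Prod.fst_sub, Prod.smul_fst, prod_apply, add_apply, smul_apply, comp_apply,
        coe_fst', coe_snd', hr, hr1, map_smul, Prod.fst_sub]
      match_scalars <;> ring
    · simp only [Prod.snd_sub, Prod.smul_snd, prod_apply, sub_apply, smul_apply, comp_apply,
        coe_fst', coe_snd', hr, hr1, map_smul]
      match_scalars
      linear_combination -hs2'
  have h2 : Tendsto (fun n => L (ψ n) - (s : ℂ) • ψ n) atTop (nhds 0) := by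
    have h0 : Tendsto (fun n => (((s - m) • (((adjoint A).comp A) (φ n) - lam • φ n),
        (0 : H₂)) : H₁ × H₂)) atTop (nhds ((s - m) • (0 : H₁), (0 : H₂))) :=
      (hweyl.const_smul (s - m)).prodMk_nhds tendsto_const_nhds
    simp only [smul_zero] at h0
    simpa only [key, Prod.mk_zero_zero] using h0
  refine ⟨h1, h2, ?_⟩
  rw [spectrum.mem_iff]
  intro hu
  obtain ⟨u, hu'⟩ := hu
  have hinv : ∀ n, ψ n = (↑u⁻¹ : (H₁ × H₂) →L[ℂ] (H₁ × H₂))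
      ((s : ℂ) • ψ n - L (ψ n)) := by
    intro n
    have h := congrFun (congrArg DFunLike.coe u.inv_mul) (ψ n)
    rw [hu'] at h
    simpa [mul_apply, Algebra.algebraMap_eq_smul_one] using h.symm
  have htend : Tendsto ψ atTop (nhds 0) := by
    have h3 : Tendsto (fun n => (s : ℂ) • ψ n - L (ψ n)) atTop (nhds 0) := by
      simpa using h2.neg
    have := ((↑u⁻¹ : (H₁ × H₂) →L[ℂ] (H₁ × H₂)).continuous.tendsto 0).comp h3
    simp only [map_zero] at this
    refine this.congr fun n => (hinv n).symm
  have hlim : Tendsto (fun n => ‖ψ n‖) atTop (nhds 0) := by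
    simpa using htend.norm
  have : lam ≤ 0 := le_of_tendsto_of_tendsto' tendsto_const_nhds hlim fun n => h1 n
  linarith
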